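/- Let χ be a multiplicative character of F_q of order N with gcd(N, p-1) = 1, where q = p^f. Then χ(b) = 1 for all b in the prime subfield F_p^*, and consequently the Gauss sum g(χ) lies in ℤ[ζ_N]. -/

import Mathlib

/-!
Every `b ∈ 𝔽_p^*` satisfies `b^(p-1) = 1`, while `χ(b)^N = 1`; as `gcd(N, p-1) = 1`, `χ(b) = 1`.
So the sums `S_t` of `χ` over the fibres `Tr x = t` agree for all `t ≠ 0`: multiplication by `t`
maps the fibre of `1` onto that of `t`, and `χ(t x) = χ(x)`. Grouping by fibres, the Gauss sum is
`∑_t S_t ζ_p^t = S_0 + S_1 ∑_{t ≠ 0} ζ_p^t = S_0 - S_1`, a sum of values of `χ`, all of which lie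
in `ℤ[ζ_N]`.
-/

/-- The canonical additive character `ψ(x) = ζ_p^{Tr_{q/p}(x)}` of a finite field of
characteristic `p`, valued in `ℂ`. -/
noncomputable def canonicalAddChar (p : ℕ) [Fact p.Prime] (F : Type*) [Field F] [Fintype F]
    [Algebra (ZMod p) F] (x : F) : ℂ :=
  Complex.exp (2 * Real.pi * Complex.I * ((Algebra.trace (ZMod p) F x).val : ℂ) / p)

namespace MulChar

theorem apply_eq_one_of_coprime {M R : Type*} [CommMonoid M] [CommMonoidWithZero R]
    (χ : MulChar M R) {n : ℕ} (hn : (orderOf χ).Coprime n) {a : Mˣ} (ha : a ^ n = 1) :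
    χ a = 1 := by
  have h_ord : χ a ^ orderOf χ = 1 := by
    rw [← pow_apply_coe, pow_orderOf_eq_one, one_apply_coe]
  have h_n : χ a ^ n = 1 := by
    rw [← map_pow, ← Units.val_pow_eq_pow_val, ha, Units.val_one, map_one]
  exact orderOf_eq_one_iff.mp <| Nat.eq_one_of_dvd_coprimes hn
    (orderOf_dvd_of_pow_eq_one (x := χ a) h_ord) (orderOf_dvd_of_pow_eq_one (x := χ a) h_n)

section Fibres

variable {K F R : Type*} [Field K] [DecidableEq K] [CommRing F] [Fintype F]
  [Algebra K F] [CommRing R]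

def fibreSum (χ : MulChar F R) (T : F →ₗ[K] K) (t : K) : R :=
  ∑ x with T x = t, χ x

theorem fibreSum_eq_fibreSum_one (χ : MulChar F R) (T : F →ₗ[K] K)
    (hχ : ∀ c : Kˣ, χ (algebraMap K F c) = 1) {t : K} (ht : t ≠ 0) :
    χ.fibreSum T t = χ.fibreSum T 1 := by
  let u : Fˣ := Units.map (algebraMap K F) (Units.mk0 t ht)
  unfold fibreSum
  rw [Finset.sum_filter, Finset.sum_filter]
  refine (Fintype.sum_equiv (Units.mulLeft u) _ _ fun x => ?_).symm
  have hT : T (u * x) = t * T x := by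
    simp [u, ← Algebra.smul_def]
  have hχu : χ (u * x) = χ x := by
    rw [map_mul, show χ u = 1 from hχ (Units.mk0 t ht), one_mul]
  simp [hT, hχu, ht]

theorem sum_mul_addChar_comp_eq_fibreSum_sub [Fintype K] [IsDomain R] (χ : MulChar F R)
    (T : F →ₗ[K] K) (hχ : ∀ c : Kˣ, χ (algebraMap K F c) = 1) {ψ : AddChar K R} (hψ : ψ ≠ 1) :
    ∑ x, χ x * ψ (T x) = χ.fibreSum T 0 - χ.fibreSum T 1 := by
  have hψ_erase : ∑ t ∈ Finset.univ.erase 0, ψ t = -1 := by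
    rw [← ψ.map_zero_eq_one]
    refine eq_neg_of_add_eq_zero_left ?_
    rw [Finset.sum_erase_add _ _ (Finset.mem_univ 0), AddChar.sum_eq_zero_of_ne_one hψ]
  calc ∑ x, χ x * ψ (T x)
      = ∑ t, χ.fibreSum T t * ψ t := by
        rw [← Finset.sum_fiberwise Finset.univ T]
        refine Finset.sum_congr rfl fun t _ => ?_
        rw [fibreSum, Finset.sum_mul]
        exact Finset.sum_congr rfl fun x hx => by rw [(Finset.mem_filter.mp hx).2]
    _ = χ.fibreSum T 0 + χ.fibreSum T 1 * ∑ t ∈ Finset.univ.erase 0, ψ t := by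
        rw [← Finset.add_sum_erase _ _ (Finset.mem_univ 0), ψ.map_zero_eq_one, mul_one,
          Finset.mul_sum]
        congr 1
        exact Finset.sum_congr rfl fun t ht => by
          rw [fibreSum_eq_fibreSum_one χ T hχ (Finset.ne_of_mem_erase ht)]
    _ = χ.fibreSum T 0 - χ.fibreSum T 1 := by
        rw [hψ_erase]
        ring

end Fibres

end MulChar

theorem canonicalAddChar_eq_stdAddChar_trace (p : ℕ) [Fact p.Prime] (F : Type*) [Field F]
    [Fintype F] [Algebra (ZMod p) F] (x : F) :
    canonicalAddChar p F x = ZMod.stdAddChar (Algebra.trace (ZMod p) F x) := by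
  rw [ZMod.stdAddChar_apply, ZMod.toCircle_apply]
  rfl

theorem ZMod.stdAddChar_ne_one (N : ℕ) [NeZero N] [Nontrivial (ZMod N)] :
    (ZMod.stdAddChar : AddChar (ZMod N) ℂ) ≠ 1 :=
  AddChar.ne_one_iff.mpr ⟨1, by
    rw [← (ZMod.stdAddChar (N := N)).map_zero_eq_one, ZMod.injective_stdAddChar.ne_iff]
    exact one_ne_zero⟩

theorem gaussSum_mem_adjoin_root_of_unity_general (p N : ℕ) [Fact p.Prime] (F : Type*) [Field F]
    [Fintype F] [DecidableEq F] [Algebra (ZMod p) F]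
    (χ : MulChar F ℂ) (hord : orderOf χ = N) (hgcd : Nat.gcd N (p - 1) = 1) :
    (∀ b : (ZMod p)ˣ, χ (algebraMap (ZMod p) F b) = 1) ∧
    (∑ x ∈ Finset.univ.erase (0 : F), χ x * canonicalAddChar p F x) ∈
      Algebra.adjoin ℤ ({Complex.exp (2 * Real.pi * Complex.I / N)} : Set ℂ) := by
  have hχ : ∀ b : (ZMod p)ˣ, χ (algebraMap (ZMod p) F b) = 1 := fun b =>
    χ.apply_eq_one_of_coprime (hord ▸ hgcd)
      (a := Units.map (algebraMap (ZMod p) F : ZMod p →* F) b) <| by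
      rw [← map_pow, ZMod.units_pow_card_sub_one_eq_one, map_one]
  refine ⟨hχ, ?_⟩
  have hζ : IsPrimitiveRoot (Complex.exp (2 * Real.pi * Complex.I / N)) (orderOf χ) :=
    hord ▸ Complex.isPrimitiveRoot_exp N (hord ▸ χ.orderOf_pos).ne'
  have h_mem (t : ZMod p) :
      χ.fibreSum (Algebra.trace (ZMod p) F) t ∈ Algebra.adjoin ℤ {Complex.exp _} :=
    Subalgebra.sum_mem _ fun x _ => χ.apply_mem_algebraAdjoin hζ x
  rw [Finset.sum_erase _ (by rw [χ.map_zero, zero_mul])]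
  simp only [canonicalAddChar_eq_stdAddChar_trace]
  rw [χ.sum_mul_addChar_comp_eq_fibreSum_sub _ hχ (ZMod.stdAddChar_ne_one p)]
  exact Subalgebra.sub_mem _ (h_mem 0) (h_mem 1)

theorem gaussSum_mem_adjoin_root_of_unity (p f N : ℕ) [Fact p.Prime] (F : Type*) [Field F]
    [Fintype F] [DecidableEq F] [Algebra (ZMod p) F] (hcard : Fintype.card F = p ^ f)
    (χ : MulChar F ℂ) (hord : orderOf χ = N) (hgcd : Nat.gcd N (p - 1) = 1) :
    (∀ b : (ZMod p)ˣ, χ (algebraMap (ZMod p) F b) = 1) ∧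
    (∑ x ∈ Finset.univ.erase (0 : F), χ x * canonicalAddChar p F x) ∈
      Algebra.adjoin ℤ ({Complex.exp (2 * Real.pi * Complex.I / N)} : Set ℂ) :=
  gaussSum_mem_adjoin_root_of_unity_general p N F χ hord hgcd
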